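/- Suppose k is odd, (I,J) is an ordered pair of disjoint subsets of {1,…,n} with |I|+|J| = k that is self-dual, and t_{(I,J)} = k/2. Then 𝕚 = (k+1)/2, 𝕛 = 𝕚 − 1, the largest element of I is i_𝕚 = n, J = {i_1 + 1, …, i_{𝕚−1} + 1} (i.e. j_l = i_l + 1 for 1 ≤ l ≤ 𝕚−1), λ_{i_l} = λ_{i_l + 1} for 1 ≤ l ≤ 𝕚−1, and λ_n = 0. -/

import Mathlib

noncomputable section

open Finset

/-- The `i`-th standard basis vector `ε_i` of `ℝ^n` (0-indexed: `eps n i` is `ε_{i+1}`). -/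
def eps (n : ℕ) (i : Fin n) : Fin n → ℝ := fun m => if m = i then 1 else 0

/-- The positive roots of type `B_n`: `ε_i - ε_j` and `ε_i + ε_j` for `i < j`, and all `ε_i`. -/
def PosRoot (n : ℕ) : Set (Fin n → ℝ) :=
  {v | (∃ i j : Fin n, i < j ∧ (v = eps n i - eps n j ∨ v = eps n i + eps n j)) ∨
       (∃ i : Fin n, v = eps n i)}

/-- The negative roots of type `B_n`. -/
def NegRoot (n : ℕ) : Set (Fin n → ℝ) := {v | -v ∈ PosRoot n}

/-- The simple roots: `simpleRoot n l` is `α_{l+1}`, i.e. `ε_{l+1} - ε_{l+2}` if `l+1 < n`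
and `ε_n` for the last one. -/
def simpleRoot (n : ℕ) (l : Fin n) : Fin n → ℝ :=
  if h : (l : ℕ) + 1 < n then eps n l - eps n ⟨(l : ℕ) + 1, h⟩ else eps n l

/-- The number of elements of `S` smaller than `x` (the 0-based rank of `x` in `S`). -/
def rk {n : ℕ} (S : Finset (Fin n)) (x : Fin n) : ℕ := (S.filter (fun y => y < x)).card

/-- The `l`-th element (0-indexed) of `S` in increasing order. -/
def elt {n : ℕ} (S : Finset (Fin n)) (l : ℕ) (h : l < S.card) : Fin n :=
  (S.orderIsoOfFin rfl ⟨l, h⟩).1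

/-- The sign `η_x` attached to the pair `(I, J)`: `-1` on `I` and `1` elsewhere. -/
def sgn {n : ℕ} (I : Finset (Fin n)) (x : Fin n) : ℝ := if x ∈ I then -1 else 1

/-- The 0-based index of the coordinate to which `w_{(I,J)}` sends the `x`-th coordinate:
`i_l ↦ k+1-l`, `j_l ↦ l`, `r_l ↦ k+l` (in the 1-based numbering of the paper). -/
def tgt {n : ℕ} (k : ℕ) (I J : Finset (Fin n)) (x : Fin n) : ℕ :=
  if x ∈ I then k - 1 - rk I x
  else if x ∈ J then rk J x
  else k + rk ((I ∪ J)ᶜ) x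

/-- The Kostant representative `w_{(I,J)}` as a linear map on `ℝ^n`, determined by
`w(ε_{i_l}) = -ε_{k+1-l}`, `w(ε_{j_l}) = ε_l`, `w(ε_{r_l}) = ε_{k+l}`. -/
def wIJ {n : ℕ} (k : ℕ) (I J : Finset (Fin n)) (v : Fin n → ℝ) : Fin n → ℝ :=
  fun m => ∑ x : Fin n, (if tgt k I J x = (m : ℕ) then sgn I x * v x else 0)

/-- The inverse of `w_{(I,J)}`. -/
def wIJinv {n : ℕ} (k : ℕ) (I J : Finset (Fin n)) (v : Fin n → ℝ) : Fin n → ℝ :=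
  fun x => sgn I x * ∑ m : Fin n, (if tgt k I J x = (m : ℕ) then v m else 0)

/-- The Weyl group of type `B_n`, realized as the group of linear automorphisms permuting
the basis vectors up to signs. -/
def WeylB (n : ℕ) : Set ((Fin n → ℝ) ≃ₗ[ℝ] (Fin n → ℝ)) :=
  {w | ∃ (σ : Equiv.Perm (Fin n)) (η : Fin n → ℝ),
    (∀ i, η i = 1 ∨ η i = -1) ∧ ∀ i, w (eps n i) = η i • eps n (σ i)}

/-- The set `W^{P_k}` of Kostant representatives: `w ∈ W` such that `w⁻¹(α_l)` is a
positive root for all `l ≠ k` (1-based `l`). -/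
def WP (n k : ℕ) : Set ((Fin n → ℝ) ≃ₗ[ℝ] (Fin n → ℝ)) :=
  {w | w ∈ WeylB n ∧ ∀ l : Fin n, (l : ℕ) + 1 ≠ k → w.symm (simpleRoot n l) ∈ PosRoot n}

/-- The length of `w`: the number of positive roots mapped by `w` to negative roots. -/
def len {n : ℕ} (w : (Fin n → ℝ) → (Fin n → ℝ)) : ℕ :=
  Set.ncard {β | β ∈ PosRoot n ∧ w β ∈ NegRoot n}

/-- `m = max({l ∈ {1,…,𝕛} : j_l < i for all i ∈ I} ∪ {0})`. -/
def mIJ {n : ℕ} (I J : Finset (Fin n)) : ℕ :=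
  (insert 0 ((Finset.Icc 1 J.card).filter
    (fun l => ∃ x ∈ J, rk J x + 1 = l ∧ ∀ i ∈ I, x < i))).max' (insert_nonempty _ _)

/-- `ρ = Σ_i (n - i + 1/2) ε_i` (1-based `i`). -/
def rho (n : ℕ) : Fin n → ℝ := fun i => (n : ℝ) - ((i : ℕ) + 1) + 1 / 2

/-- The vector `λ + ρ` in `ℝ^n`. -/
def lamRho (n : ℕ) (lam : Fin n → ℤ) : Fin n → ℝ := fun i => (lam i : ℝ) + rho n i

/-- `t_{(I,J)} = Σ_l (λ_{i_l} - i_l) - Σ_l (λ_{j_l} - j_l) + (𝕚 - 𝕛)(n + 1/2)`. -/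
def tIJ {n : ℕ} (lam : Fin n → ℤ) (I J : Finset (Fin n)) : ℝ :=
  (∑ l : Fin I.card,
    ((lam (elt I (l : ℕ) l.isLt) : ℝ) - (((elt I (l : ℕ) l.isLt : Fin n) : ℕ) + 1)))
  - (∑ l : Fin J.card,
    ((lam (elt J (l : ℕ) l.isLt) : ℝ) - (((elt J (l : ℕ) l.isLt : Fin n) : ℕ) + 1)))
  + ((I.card : ℝ) - (J.card : ℝ)) * ((n : ℝ) + 1 / 2)

/-- `c`: the arithmetic mean of the first `k` coordinates of `w_{(I,J)}(λ+ρ) - ρ`. -/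
def cIJ {n : ℕ} (k : ℕ) (lam : Fin n → ℤ) (I J : Finset (Fin n)) : ℝ :=
  (∑ m ∈ Finset.univ.filter (fun m : Fin n => (m : ℕ) < k),
    (wIJ k I J (lamRho n lam) m - rho n m)) / (k : ℝ)

/-- `μ_{(I,J)} = w_{(I,J)}(λ+ρ) - ρ - c·(ε_1 + … + ε_k)`. -/
def muIJ {n : ℕ} (k : ℕ) (lam : Fin n → ℤ) (I J : Finset (Fin n)) : Fin n → ℝ :=
  fun m => wIJ k I J (lamRho n lam) m - rho n m -
    cIJ k lam I J * (∑ i ∈ Finset.univ.filter (fun i : Fin n => (i : ℕ) < k), eps n i) m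

/-- `(I,J)` is self-dual: the `l`-th coordinate of `μ_{(I,J)}` is the negative of its
`(k+1-l)`-th coordinate for all `1 ≤ l ≤ k`. -/
def SelfDual {n : ℕ} (k : ℕ) (lam : Fin n → ℤ) (I J : Finset (Fin n)) : Prop :=
  ∀ (l : ℕ) (_ : 1 ≤ l) (_ : l ≤ k) (h1 : l - 1 < n) (h2 : k - l < n),
    muIJ k lam I J ⟨l - 1, h1⟩ = - muIJ k lam I J ⟨k - l, h2⟩

/-- The set `𝒮_k` of ordered pairs `(I,J)` of disjoint subsets with `|I| + |J| = k`. -/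
def SIJ (n k : ℕ) : Set (Finset (Fin n) × Finset (Fin n)) :=
  {p | Disjoint p.1 p.2 ∧ p.1.card + p.2.card = k}


/-! ### Auxiliary lemmas -/

theorem elt_mem {n : ℕ} (S : Finset (Fin n)) (l : ℕ) (h : l < S.card) : elt S l h ∈ S :=
  (S.orderIsoOfFin rfl ⟨l, h⟩).2

theorem elt_congr {n : ℕ} (S : Finset (Fin n)) {l l' : ℕ} (h : l < S.card) (h' : l' < S.card)
    (hll : l = l') : elt S l h = elt S l' h' := by subst hll; rfl

theorem elt_lt_elt {n : ℕ} (S : Finset (Fin n)) {l l' : ℕ} (h : l < S.card) (h' : l' < S.card)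
    (hll : l < l') : elt S l h < elt S l' h' :=
  (S.orderIsoOfFin rfl).lt_iff_lt.2 (by exact hll)

theorem rk_elt {n : ℕ} (S : Finset (Fin n)) (l : ℕ) (h : l < S.card) :
    rk S (elt S l h) = l := by
  classical
  unfold rk
  have himg : S.filter (fun y => y < elt S l h) =
      (Finset.univ.filter (fun a : Fin S.card => a < ⟨l, h⟩)).image
        (fun a => ((S.orderIsoOfFin rfl a : Fin n))) := by
    ext y
    simp only [mem_filter, mem_image, mem_univ, true_and]
    constructor
    · rintro ⟨hyS, hlt⟩
      refine ⟨(S.orderIsoOfFin rfl).symm ⟨y, hyS⟩, ?_, ?_⟩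
      · rw [← (S.orderIsoOfFin rfl).lt_iff_lt]
        rw [OrderIso.apply_symm_apply]; exact hlt
      · simp
    · rintro ⟨a, ha, rfl⟩
      refine ⟨(S.orderIsoOfFin rfl a).2, ?_⟩
      exact (S.orderIsoOfFin rfl).lt_iff_lt.2 ha
  rw [himg, Finset.card_image_of_injective _ (fun a b hab =>
    (S.orderIsoOfFin rfl).injective (Subtype.ext hab))]
  have he : (Finset.univ.filter (fun a : Fin S.card => a < ⟨l, h⟩)) = Finset.Iio ⟨l, h⟩ := by
    ext a; simp [Fin.lt_def]
  rw [he, Fin.card_Iio]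

theorem rk_lt_card {n : ℕ} {S : Finset (Fin n)} {x : Fin n} (hx : x ∈ S) : rk S x < S.card := by
  apply Finset.card_lt_card
  constructor
  · exact Finset.filter_subset _ _
  · intro hsub
    exact absurd ((Finset.mem_filter.1 (hsub hx)).2) (lt_irrefl x)

theorem rk_lt_rk {n : ℕ} {S : Finset (Fin n)} {x y : Fin n} (hx : x ∈ S) (hxy : x < y) :
    rk S x < rk S y := by
  apply Finset.card_lt_card
  constructor
  · intro z hz
    rw [Finset.mem_filter] at hz ⊢
    exact ⟨hz.1, lt_trans hz.2 hxy⟩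
  · intro hsub
    have : x ∈ S.filter (fun z => z < y) := Finset.mem_filter.2 ⟨hx, hxy⟩
    exact absurd ((Finset.mem_filter.1 (hsub this)).2) (lt_irrefl x)

theorem eq_elt_of_rk {n : ℕ} {S : Finset (Fin n)} {x : Fin n} (hx : x ∈ S) {l : ℕ}
    (h : l < S.card) (hr : rk S x = l) : x = elt S l h := by
  rcases lt_trichotomy x (elt S l h) with hlt | heq | hgt
  · have := rk_lt_rk hx hlt
    rw [hr, rk_elt] at this; omega
  · exact heq
  · have := rk_lt_rk (elt_mem S l h) hgt
    rw [hr, rk_elt] at this; omega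

theorem sum_elt {n : ℕ} (S : Finset (Fin n)) (f : Fin n → ℝ) :
    ∑ l : Fin S.card, f (elt S (l : ℕ) l.isLt) = ∑ x ∈ S, f x := by
  rw [← Finset.sum_coe_sort S f]
  exact Fintype.sum_equiv (S.orderIsoOfFin rfl).toEquiv _ _ (fun l => rfl)

section W

set_option linter.unusedSectionVars false

variable {n k : ℕ} {I J : Finset (Fin n)}
  (hdisj : Disjoint I J) (hcard : I.card + J.card = k)

include hdisj hcard

theorem tgt_of_mem_I {x : Fin n} (hx : x ∈ I) :
    tgt k I J x = k - 1 - rk I x ∧ J.card ≤ k - 1 - rk I x ∧ k - 1 - rk I x < k := by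
  have h1 : rk I x < I.card := rk_lt_card hx
  refine ⟨by simp [tgt, hx], by omega, by omega⟩

theorem tgt_of_mem_J {x : Fin n} (hx : x ∈ J) :
    tgt k I J x = rk J x ∧ rk J x < J.card := by
  have hxI : x ∉ I := fun h => (Finset.disjoint_left.1 hdisj h) hx
  exact ⟨by simp [tgt, hx, hxI], rk_lt_card hx⟩

theorem tgt_of_not_mem {x : Fin n} (hx1 : x ∉ I) (hx2 : x ∉ J) : k ≤ tgt k I J x := by
  simp [tgt, hx1, hx2]

theorem wIJ_eq_J (v : Fin n → ℝ) {m : Fin n} (hm : (m : ℕ) < J.card) :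
    wIJ k I J v m = v (elt J (m : ℕ) hm) := by
  classical
  unfold wIJ
  set x0 := elt J (m : ℕ) hm with hx0
  have hx0J : x0 ∈ J := elt_mem _ _ _
  have hx0I : x0 ∉ I := fun h => (Finset.disjoint_left.1 hdisj h) hx0J
  rw [Finset.sum_eq_single_of_mem x0 (Finset.mem_univ _)]
  · rw [if_pos, sgn, if_neg hx0I, one_mul]
    rw [(tgt_of_mem_J hdisj hcard hx0J).1, rk_elt]
  · intro b _ hb
    rw [if_neg]
    intro htb
    by_cases hbI : b ∈ I
    · have := tgt_of_mem_I hdisj hcard (J := J) hbI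
      omega
    by_cases hbJ : b ∈ J
    · have h1 := (tgt_of_mem_J hdisj hcard hbJ).1
      exact hb (eq_elt_of_rk hbJ hm (by omega))
    · have := tgt_of_not_mem hdisj hcard (k := k) hbI hbJ
      omega

theorem wIJ_eq_I (v : Fin n → ℝ) {m : Fin n} (hm1 : J.card ≤ (m : ℕ)) (hm2 : (m : ℕ) < k)
    (h : k - 1 - (m : ℕ) < I.card) :
    wIJ k I J v m = - v (elt I (k - 1 - (m : ℕ)) h) := by
  classical
  unfold wIJ
  set x0 := elt I (k - 1 - (m : ℕ)) h with hx0
  have hx0I : x0 ∈ I := elt_mem _ _ _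
  rw [Finset.sum_eq_single_of_mem x0 (Finset.mem_univ _)]
  · rw [if_pos, sgn, if_pos hx0I, neg_one_mul]
    rw [(tgt_of_mem_I hdisj hcard (J := J) hx0I).1, rk_elt]
    omega
  · intro b _ hb
    rw [if_neg]
    intro htb
    by_cases hbI : b ∈ I
    · have h1 := (tgt_of_mem_I hdisj hcard (J := J) hbI).1
      have h2 : rk I b < I.card := rk_lt_card hbI
      exact hb (eq_elt_of_rk hbI h (by omega))
    by_cases hbJ : b ∈ J
    · have := tgt_of_mem_J hdisj hcard hbJ
      omega
    · have := tgt_of_not_mem hdisj hcard (k := k) hbI hbJ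
      omega

theorem wIJ_eq_J' (v : Fin n → ℝ) (mv : ℕ) (hmn : mv < n) (hm : mv < J.card) :
    wIJ k I J v ⟨mv, hmn⟩ = v (elt J mv hm) :=
  wIJ_eq_J hdisj hcard v (m := ⟨mv, hmn⟩) hm

theorem wIJ_eq_I' (v : Fin n → ℝ) (mv : ℕ) (hmn : mv < n) (hm1 : J.card ≤ mv) (hm2 : mv < k)
    (h : k - 1 - mv < I.card) :
    wIJ k I J v ⟨mv, hmn⟩ = - v (elt I (k - 1 - mv) h) :=
  wIJ_eq_I hdisj hcard v (m := ⟨mv, hmn⟩) hm1 hm2 h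

theorem sum_wIJ (v : Fin n → ℝ) (hkn : k ≤ n) :
    ∑ m ∈ Finset.univ.filter (fun m : Fin n => (m : ℕ) < k), wIJ k I J v m
      = ∑ x ∈ J, v x - ∑ x ∈ I, v x := by
  classical
  unfold wIJ
  rw [Finset.sum_comm]
  have hterm : ∀ x : Fin n,
      (∑ m ∈ Finset.univ.filter (fun m : Fin n => (m : ℕ) < k),
        if tgt k I J x = (m : ℕ) then sgn I x * v x else 0)
      = if x ∈ I then -v x else if x ∈ J then v x else 0 := by
    intro x
    by_cases hxI : x ∈ I
    · have ht := tgt_of_mem_I hdisj hcard (J := J) hxI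
      rw [Finset.sum_eq_single_of_mem (⟨tgt k I J x, by omega⟩ : Fin n)
        (by simp only [Finset.mem_filter, Finset.mem_univ, true_and]; omega)]
      · rw [if_pos rfl, sgn, if_pos hxI, if_pos hxI]; ring
      · intro b _ hb
        rw [if_neg]
        intro htb; exact hb (Fin.ext htb.symm)
    by_cases hxJ : x ∈ J
    · have ht := tgt_of_mem_J hdisj hcard hxJ
      have hJk : J.card ≤ k := by omega
      rw [Finset.sum_eq_single_of_mem (⟨tgt k I J x, by omega⟩ : Fin n)
        (by simp only [Finset.mem_filter, Finset.mem_univ, true_and]; omega)]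
      · rw [if_pos rfl, sgn, if_neg hxI, if_neg hxI, if_pos hxJ]; ring
      · intro b _ hb
        rw [if_neg]
        intro htb; exact hb (Fin.ext htb.symm)
    · have ht := tgt_of_not_mem hdisj hcard (k := k) hxI hxJ
      rw [if_neg hxI, if_neg hxJ]
      apply Finset.sum_eq_zero
      intro m hm
      simp only [Finset.mem_filter, Finset.mem_univ, true_and] at hm
      rw [if_neg]; omega
  calc (∑ x : Fin n, ∑ m ∈ Finset.univ.filter (fun m : Fin n => (m : ℕ) < k),
        if tgt k I J x = (m : ℕ) then sgn I x * v x else 0)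
      = ∑ x : Fin n, (if x ∈ I then -v x else if x ∈ J then v x else 0) :=
        Finset.sum_congr rfl (fun x _ => hterm x)
    _ = ∑ x ∈ I ∪ J, (if x ∈ I then -v x else if x ∈ J then v x else 0) := by
        refine (Finset.sum_subset (Finset.subset_univ _) ?_).symm
        intro x _ hx
        rw [Finset.mem_union] at hx
        push_neg at hx
        rw [if_neg hx.1, if_neg hx.2]
    _ = ∑ x ∈ J, v x - ∑ x ∈ I, v x := by
        rw [Finset.sum_union hdisj]
        rw [Finset.sum_congr rfl (fun x hx => if_pos hx),
          Finset.sum_congr rfl (fun x (hx : x ∈ J) => by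
            rw [if_neg (fun h => (Finset.disjoint_left.1 hdisj h) hx), if_pos hx])]
        rw [Finset.sum_neg_distrib]
        ring

end W

theorem sum_filter_lt {n k : ℕ} (hkn : k ≤ n) (g : ℕ → ℝ) :
    ∑ m ∈ Finset.univ.filter (fun m : Fin n => (m : ℕ) < k), g (m : ℕ)
      = ∑ j ∈ Finset.range k, g j := by
  classical
  refine Finset.sum_bij' (fun m _ => (m : ℕ)) (fun j hj => ⟨j, by
    simp only [Finset.mem_range] at hj; omega⟩) ?_ ?_ ?_ ?_ ?_
  · intro a ha; simp only [Finset.mem_filter, Finset.mem_univ, true_and] at ha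
    simp [ha]
  · intro j hj; simp only [Finset.mem_range] at hj
    simp only [Finset.mem_filter, Finset.mem_univ, true_and]; exact hj
  · intro a ha; rfl
  · intro j hj; rfl
  · intro a ha; rfl

theorem cIJ_val {n k : ℕ} {I J : Finset (Fin n)} {lam : Fin n → ℤ}
    (hdisj : Disjoint I J) (hcard : I.card + J.card = k) (hk1 : 1 ≤ k) (hkn : k ≤ n)
    (ht : tIJ lam I J = (k : ℝ) / 2) :
    cIJ k lam I J = -(n : ℝ) + ((k : ℝ) - 1) / 2 := by
  classical
  have hA : ∑ m ∈ Finset.univ.filter (fun m : Fin n => (m : ℕ) < k),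
      wIJ k I J (lamRho n lam) m
      = ∑ x ∈ J, lamRho n lam x - ∑ x ∈ I, lamRho n lam x :=
    sum_wIJ hdisj hcard _ hkn
  have hrho : ∑ m ∈ Finset.univ.filter (fun m : Fin n => (m : ℕ) < k), rho n m
      = (k : ℝ) * ((n : ℝ) - 1/2) - (k : ℝ) * ((k : ℝ) - 1) / 2 := by
    have h1 : ∑ m ∈ Finset.univ.filter (fun m : Fin n => (m : ℕ) < k), rho n m
        = ∑ j ∈ Finset.range k, (((n : ℝ) - 1/2) - (j : ℕ)) := by
      rw [← sum_filter_lt hkn (fun j => ((n : ℝ) - 1/2) - (j : ℕ))]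
      exact Finset.sum_congr rfl (fun m _ => by unfold rho; ring)
    have h2 : (∑ j ∈ Finset.range k, ((j : ℕ) : ℝ)) = (k : ℝ) * ((k : ℝ) - 1) / 2 := by
      have := Finset.sum_range_id_mul_two k
      have hc : ((∑ i ∈ Finset.range k, i : ℕ) : ℝ) * 2 = (k : ℝ) * ((k : ℝ) - 1) := by
        rw [← Nat.cast_ofNat (n := 2), ← Nat.cast_mul, this]
        push_cast [Nat.cast_sub hk1]; ring
      push_cast at hc ⊢
      linarith
    rw [h1, Finset.sum_sub_distrib, Finset.sum_const, Finset.card_range, h2,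
      nsmul_eq_mul]
  have hg : ∀ (S : Finset (Fin n)), ∑ x ∈ S, lamRho n lam x
      = (∑ x ∈ S, ((lam x : ℝ) - ((x : ℕ) + 1))) + (S.card : ℝ) * ((n : ℝ) + 1/2) := by
    intro S
    have hh : ∑ x ∈ S, lamRho n lam x
        = ∑ x ∈ S, (((lam x : ℝ) - ((x : ℕ) + 1)) + ((n : ℝ) + 1/2)) :=
      Finset.sum_congr rfl (fun x _ => by unfold lamRho rho; ring)
    rw [hh, Finset.sum_add_distrib, Finset.sum_const, nsmul_eq_mul]
  have htIJ : (∑ x ∈ I, ((lam x : ℝ) - ((x : ℕ) + 1)))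
      - (∑ x ∈ J, ((lam x : ℝ) - ((x : ℕ) + 1)))
      + ((I.card : ℝ) - (J.card : ℝ)) * ((n : ℝ) + 1 / 2) = (k : ℝ) / 2 := by
    rw [← sum_elt I (fun x => (lam x : ℝ) - ((x : ℕ) + 1)),
      ← sum_elt J (fun x => (lam x : ℝ) - ((x : ℕ) + 1))]
    exact ht
  have hk0 : (k : ℝ) ≠ 0 := by positivity
  unfold cIJ
  rw [Finset.sum_sub_distrib, hA, hrho, hg I, hg J]
  rw [div_eq_iff hk0]
  linear_combination (-1 : ℝ) * htIJ

theorem eps_sum {n k : ℕ} (m : Fin n) (hm : (m : ℕ) < k) :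
    (∑ i ∈ Finset.univ.filter (fun i : Fin n => (i : ℕ) < k), eps n i) m = 1 := by
  classical
  rw [Finset.sum_apply]
  unfold eps
  rw [Finset.sum_ite_eq]
  simp [hm]

set_option maxHeartbeats 1000000 in
/-- the structure of self-dual pairs with `t_{(I,J)} = k/2`, for odd `k`. -/
theorem selfDual_t_half_k_odd
    (n k : ℕ) (hn : 3 ≤ n) (hk1 : 1 ≤ k) (hkn : k ≤ n) (hodd : Odd k)
    (lam : Fin n → ℤ) (hdom : ∀ i j : Fin n, i ≤ j → lam j ≤ lam i) (hnn : ∀ i, 0 ≤ lam i)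
    (I J : Finset (Fin n)) (hdisj : Disjoint I J) (hcard : I.card + J.card = k)
    (hsd : SelfDual k lam I J) (ht : tIJ lam I J = (k : ℝ) / 2) :
    I.card = (k + 1) / 2 ∧
    J.card = I.card - 1 ∧
    (∀ h : I.card - 1 < I.card, ((elt I (I.card - 1) h : Fin n) : ℕ) = n - 1) ∧
    (∀ (l : ℕ) (hJ : l < J.card) (hI : l < I.card),
      ((elt J l hJ : Fin n) : ℕ) = ((elt I l hI : Fin n) : ℕ) + 1) ∧
    (∀ (l : ℕ) (hI : l < I.card) (_ : l + 2 ≤ I.card)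
        (hb : ((elt I l hI : Fin n) : ℕ) + 1 < n),
      lam (elt I l hI) = lam ⟨((elt I l hI : Fin n) : ℕ) + 1, hb⟩) ∧
    (∀ h : n - 1 < n, lam ⟨n - 1, h⟩ = 0) := by
  classical
  obtain ⟨a, hk⟩ := hodd
  have ha_n : a < n := by omega
  -- the key pairing equations from self-duality and t = k/2
  have hc := cIJ_val hdisj hcard hk1 hkn ht
  have hE : ∀ l (h1 : 1 ≤ l) (h2 : l ≤ k),
      wIJ k I J (lamRho n lam) ⟨l - 1, by omega⟩
        + wIJ k I J (lamRho n lam) ⟨k - l, by omega⟩ = (-1 : ℝ) := by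
    intro l h1 h2
    have hsd' := hsd l h1 h2 (by omega) (by omega)
    unfold muIJ at hsd'
    rw [eps_sum (k := k) (⟨l - 1, by omega⟩ : Fin n) (by show l - 1 < k; omega),
      eps_sum (k := k) (⟨k - l, by omega⟩ : Fin n) (by show k - l < k; omega), hc] at hsd'
    have hr : rho n (⟨l - 1, by omega⟩ : Fin n) + rho n (⟨k - l, by omega⟩ : Fin n)
        = 2 * (n : ℝ) - k := by
      unfold rho
      show (n : ℝ) - (((l - 1 : ℕ) : ℝ) + 1) + 1 / 2
        + ((n : ℝ) - (((k - l : ℕ) : ℝ) + 1) + 1 / 2) = 2 * (n : ℝ) - k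
      rw [Nat.cast_sub h1, Nat.cast_sub h2]
      push_cast
      ring
    linarith [hsd', hr]
  have hE' : ∀ (m1 m2 : ℕ) (p1 : m1 < n) (p2 : m2 < n), m1 + m2 = k - 1 →
      wIJ k I J (lamRho n lam) ⟨m1, p1⟩ + wIJ k I J (lamRho n lam) ⟨m2, p2⟩ = (-1 : ℝ) := by
    intro m1 m2 p1 p2 hsum
    have h := hE (m1 + 1) (by omega) (by omega)
    have e2 : ∀ (pf : k - (m1 + 1) < n), (⟨k - (m1 + 1), pf⟩ : Fin n) = ⟨m2, p2⟩ :=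
      fun pf => Fin.ext (by show k - (m1 + 1) = m2; omega)
    rw [e2 (by omega)] at h
    exact h
  -- basic properties of L := lamRho
  have hLhalf : ∀ x : Fin n, (1 : ℝ) / 2 ≤ lamRho n lam x := by
    intro x
    have h1 : (0 : ℝ) ≤ (lam x : ℝ) := by exact_mod_cast hnn x
    have h2 : ((x : ℕ) : ℝ) + 1 ≤ (n : ℝ) := by exact_mod_cast x.isLt
    unfold lamRho rho
    linarith
  have hLeq : ∀ x : Fin n, lamRho n lam x = 1 / 2 → lam x = 0 ∧ (x : ℕ) = n - 1 := by
    intro x hx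
    have h1 : (0 : ℝ) ≤ (lam x : ℝ) := by exact_mod_cast hnn x
    have h2 : ((x : ℕ) : ℝ) + 1 ≤ (n : ℝ) := by exact_mod_cast x.isLt
    unfold lamRho rho at hx
    have hl0 : (lam x : ℝ) = 0 := by linarith
    have hxn : ((x : ℕ) : ℝ) + 1 = (n : ℝ) := by linarith
    constructor
    · exact_mod_cast hl0
    · have : (x : ℕ) + 1 = n := by exact_mod_cast hxn
      omega
  have hLlt : ∀ x y : Fin n, (x : ℕ) < (y : ℕ) →
      lamRho n lam y + (((y : ℕ) : ℝ) - ((x : ℕ) : ℝ)) ≤ lamRho n lam x := by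
    intro x y hxy
    have hd : lam y ≤ lam x := hdom x y (by exact (Fin.lt_iff_val_lt_val.2 hxy).le)
    have hd' : (lam y : ℝ) ≤ (lam x : ℝ) := by exact_mod_cast hd
    unfold lamRho rho
    linarith
  -- Step 1: J.card ≤ a
  have hja : J.card ≤ a := by
    by_contra hcon
    push_neg at hcon
    have hw := wIJ_eq_J' hdisj hcard (lamRho n lam) a ha_n hcon
    have h2 := hE' a a ha_n ha_n (by omega)
    rw [hw] at h2
    have h3 := hLhalf (elt J a hcon)
    linarith
  have hIa : k - 1 - a < I.card := by omega
  -- Step 2: the middle coordinate forces λ_n = 0 and i_𝕚 = n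
  have hmid := hE' a a ha_n ha_n (by omega)
  rw [wIJ_eq_I' hdisj hcard (lamRho n lam) a ha_n hja (by omega) hIa] at hmid
  have hL12 : lamRho n lam (elt I (k - 1 - a) hIa) = 1 / 2 := by linarith
  obtain ⟨hlam0, hvaln⟩ := hLeq _ hL12
  -- Step 3: J.card = a
  have hjeq : J.card = a := by
    by_contra hcon
    have hja' : J.card < a := by omega
    have pn1 : J.card < n := by omega
    have pn2 : k - 1 - J.card < n := by omega
    have pI1 : k - 1 - J.card < I.card := by omega
    have pI2 : k - 1 - (k - 1 - J.card) < I.card := by omega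
    have h1 := hE' J.card (k - 1 - J.card) pn1 pn2 (by omega)
    rw [wIJ_eq_I' hdisj hcard (lamRho n lam) J.card pn1 (le_refl _) (by omega) pI1,
      wIJ_eq_I' hdisj hcard (lamRho n lam) (k - 1 - J.card) pn2 (by omega) (by omega)
        pI2] at h1
    have hv1 := hLhalf (elt I (k - 1 - J.card) pI1)
    have hv2 := hLhalf (elt I (k - 1 - (k - 1 - J.card)) pI2)
    have hL1 : lamRho n lam (elt I (k - 1 - J.card) pI1) = 1 / 2 := by linarith
    have hL2 : lamRho n lam (elt I (k - 1 - (k - 1 - J.card)) pI2) = 1 / 2 := by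
      linarith
    obtain ⟨_, hn1⟩ := hLeq _ hL1
    obtain ⟨_, hn2⟩ := hLeq _ hL2
    have hlt : elt I (k - 1 - (k - 1 - J.card)) pI2 < elt I (k - 1 - J.card) pI1 :=
      elt_lt_elt I pI2 pI1 (by omega)
    rw [Fin.lt_iff_val_lt_val, hn1, hn2] at hlt
    omega
  have hIcard : I.card = a + 1 := by omega
  -- Step 4: the pairing between J and I
  have hIJ : ∀ l (hJ : l < J.card) (hI : l < I.card),
      ((elt J l hJ : Fin n) : ℕ) = ((elt I l hI : Fin n) : ℕ) + 1
        ∧ lam (elt J l hJ) = lam (elt I l hI) := by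
    intro l hJ hI
    have pn1 : l < n := by omega
    have pn2 : k - 1 - l < n := by omega
    have pI2 : k - 1 - (k - 1 - l) < I.card := by omega
    have h1 := hE' l (k - 1 - l) pn1 pn2 (by omega)
    rw [wIJ_eq_J' hdisj hcard (lamRho n lam) l pn1 hJ,
      wIJ_eq_I' hdisj hcard (lamRho n lam) (k - 1 - l) pn2 (by omega) (by omega)
        pI2] at h1
    rw [elt_congr I (l := k - 1 - (k - 1 - l)) pI2 hI (by omega)] at h1
    set x := elt I l hI with hxdef
    set y := elt J l hJ with hydef
    have hxI : x ∈ I := elt_mem _ _ _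
    have hyJ : y ∈ J := elt_mem _ _ _
    have hxy : lamRho n lam y = lamRho n lam x - 1 := by linarith
    have hvv : (x : ℕ) < (y : ℕ) := by
      rcases lt_trichotomy ((x : Fin n) : ℕ) ((y : Fin n) : ℕ) with h | h | h
      · exact h
      · exact absurd (Fin.ext h) (fun he => (Finset.disjoint_left.1 hdisj hxI) (he ▸ hyJ))
      · have := hLlt y x h
        have hcast : ((y : ℕ) : ℝ) + 1 ≤ ((x : ℕ) : ℝ) := by exact_mod_cast h
        linarith
    have hle := hLlt x y hvv
    have hyx1 : (y : ℕ) = (x : ℕ) + 1 := by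
      by_contra hcon
      have h2 : (x : ℕ) + 2 ≤ (y : ℕ) := by omega
      have hcast : ((x : ℕ) : ℝ) + 2 ≤ ((y : ℕ) : ℝ) := by exact_mod_cast h2
      linarith
    refine ⟨hyx1, ?_⟩
    have hcast : ((y : ℕ) : ℝ) = ((x : ℕ) : ℝ) + 1 := by exact_mod_cast hyx1
    have : (lam y : ℝ) = (lam x : ℝ) := by
      unfold lamRho rho at hxy
      linarith
    exact_mod_cast this
  refine ⟨by omega, by omega, ?_, ?_, ?_, ?_⟩
  · -- largest element of I is n
    intro h
    rw [elt_congr I h hIa (by omega)]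
    exact hvaln
  · -- J elements
    intro l hJ hI
    exact (hIJ l hJ hI).1
  · -- λ equalities
    intro l hI hl2 hb
    have hlJ : l < J.card := by omega
    obtain ⟨hval, hlam⟩ := hIJ l hlJ hI
    have he : (⟨((elt I l hI : Fin n) : ℕ) + 1, hb⟩ : Fin n) = elt J l hlJ :=
      Fin.ext (by exact hval.symm)
    rw [he]
    exact hlam.symm
  · -- λ_n = 0
    intro h
    have he : (⟨n - 1, h⟩ : Fin n) = elt I (k - 1 - a) hIa := Fin.ext (by exact hvaln.symm)
    rw [he]
    exact hlam0

end
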